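/- arXiv:0909.0833 — 4 statements merged into one kernel-verified Lean document; each statement's English description precedes it below -/
import Mathlib

section
/- Fix n ≥ 1, points X₁,…,Xₙ in an interval I, and functions w₁,…,wₙ, w̃₁,…,w̃ₙ : I → ℝ with w_i(x) ≥ 0 for all i and x, and Σ_{i=1}^n w_i(x) = 1 for all x ∈ I. Define ŵ_j(x) = w_j(x) + w̃_j(x) − Σ_{i=1}^n w_i(x) w̃_j(X_i). Then for every x ∈ I, Σ_{j=1}^n ŵ_j(x)² ≤ 3 Σ_{j=1}^n w_j(x)² + 6 sup_{u∈I} Σ_{j=1}^n w̃_j(u)². -/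
/-!
Write `c_j(x) = ∑ᵢ wᵢ(x) w̃ⱼ(Xᵢ)`, so that `ŵⱼ = wⱼ + w̃ⱼ - c_j` and `(a + b - c)² ≤ 3(a² + b² + c²)`.
The `w̃`-term at `x` is at most `S = sup_{u ∈ I} ∑ⱼ w̃ⱼ(u)²`. For the correction term, `c_j(x)` is
a convex combination of the values `w̃ⱼ(Xᵢ)`, so by Jensen `∑ⱼ c_j(x)² ≤ ∑ᵢ wᵢ(x) ∑ⱼ w̃ⱼ(Xᵢ)² ≤ S`.
-/

open Finset

theorem le_biSup_of_bddAbove_image {α β : Type*} [ConditionallyCompleteLattice β] {f : α → β}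
    {s : Set α} (hf : BddAbove (f '' s)) {a : α} (ha : a ∈ s) : f a ≤ ⨆ x ∈ s, f x := by
  have hrange : (⋃ x, Set.range fun _ : x ∈ s => f x) = f '' s := by ext; simp
  exact le_ciSup₂ (f := fun x (_ : x ∈ s) => f x) (hrange ▸ hf) a ha

theorem sq_add_sub_le (a b c : ℝ) : (a + b - c) ^ 2 ≤ 3 * (a ^ 2 + b ^ 2 + c ^ 2) := by
  nlinarith [sq_nonneg (a - b), sq_nonneg (a + c), sq_nonneg (b + c)]

section ConvexCombination

variable {ι : Type*} {s : Finset ι} {w : ι → ℝ}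

theorem sq_sum_mul_le_sum_mul_sq (hw : ∀ i ∈ s, 0 ≤ w i) (hw_sum : ∑ i ∈ s, w i = 1)
    (a : ι → ℝ) : (∑ i ∈ s, w i * a i) ^ 2 ≤ ∑ i ∈ s, w i * a i ^ 2 := by
  simpa using (Even.convexOn_pow even_two).map_sum_le hw hw_sum fun i _ => Set.mem_univ (a i)

theorem sum_sq_sum_mul_le_of_sum_sq_le {κ : Type*} [Fintype κ] (hw : ∀ i ∈ s, 0 ≤ w i)
    (hw_sum : ∑ i ∈ s, w i = 1) {v : ι → κ → ℝ} {S : ℝ} (hv : ∀ i ∈ s, ∑ k, v i k ^ 2 ≤ S) :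
    ∑ k, (∑ i ∈ s, w i * v i k) ^ 2 ≤ S :=
  calc ∑ k, (∑ i ∈ s, w i * v i k) ^ 2
      ≤ ∑ k, ∑ i ∈ s, w i * v i k ^ 2 :=
        sum_le_sum fun k _ => sq_sum_mul_le_sum_mul_sq hw hw_sum (v · k)
    _ = ∑ i ∈ s, w i * ∑ k, v i k ^ 2 := by simp only [sum_comm (s := univ), mul_sum]
    _ ≤ ∑ i ∈ s, w i * S := sum_le_sum fun i hi => mul_le_mul_of_nonneg_left (hv i hi) (hw i hi)
    _ = S := by rw [← sum_mul, hw_sum, one_mul]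

end ConvexCombination

theorem sum_sq_boosted_weights_le_general
    (n : ℕ) (I : Set ℝ) (X : Fin n → ℝ) (hX : ∀ i, X i ∈ I)
    (w wt : Fin n → ℝ → ℝ)
    (hw_nonneg : ∀ i, ∀ x ∈ I, 0 ≤ w i x)
    (hw_sum : ∀ x ∈ I, ∑ i, w i x = 1)
    (hbdd : BddAbove ((fun u => ∑ j, (wt j u) ^ 2) '' I))
    (what : Fin n → ℝ → ℝ)
    (hwhat : ∀ j, ∀ x, what j x = w j x + wt j x - ∑ i, w i x * wt j (X i)) :
    ∀ x ∈ I, ∑ j, (what j x) ^ 2 ≤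
      3 * ∑ j, (w j x) ^ 2 + 6 * ⨆ u ∈ I, ∑ j, (wt j u) ^ 2 := by
  intro x hx
  set S := ⨆ u ∈ I, ∑ j, (wt j u) ^ 2
  have hS : ∀ u ∈ I, ∑ j, (wt j u) ^ 2 ≤ S := fun u hu => le_biSup_of_bddAbove_image hbdd hu
  have hcorr : ∑ j, (∑ i, w i x * wt j (X i)) ^ 2 ≤ S :=
    sum_sq_sum_mul_le_of_sum_sq_le (fun i _ => hw_nonneg i x hx) (hw_sum x hx)
      fun i _ => hS (X i) (hX i)
  calc ∑ j, (what j x) ^ 2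
      ≤ ∑ j, 3 * ((w j x) ^ 2 + (wt j x) ^ 2 + (∑ i, w i x * wt j (X i)) ^ 2) :=
        sum_le_sum fun j _ => hwhat j x ▸ sq_add_sub_le _ _ _
    _ = 3 * ∑ j, (w j x) ^ 2 + 3 * ∑ j, (wt j x) ^ 2
          + 3 * ∑ j, (∑ i, w i x * wt j (X i)) ^ 2 := by
        simp only [← mul_sum, sum_add_distrib]; ring
    _ ≤ 3 * ∑ j, (w j x) ^ 2 + 6 * S := by linarith [hS x hx]

theorem sum_sq_boosted_weights_le
    (n : ℕ) (hn : 1 ≤ n) (I : Set ℝ) (X : Fin n → ℝ) (hX : ∀ i, X i ∈ I)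
    (w wt : Fin n → ℝ → ℝ)
    (hw_nonneg : ∀ i, ∀ x ∈ I, 0 ≤ w i x)
    (hw_sum : ∀ x ∈ I, ∑ i, w i x = 1)
    (hbdd : BddAbove ((fun u => ∑ j, (wt j u) ^ 2) '' I))
    (what : Fin n → ℝ → ℝ)
    (hwhat : ∀ j, ∀ x, what j x = w j x + wt j x - ∑ i, w i x * wt j (X i)) :
    ∀ x ∈ I, ∑ j, (what j x) ^ 2 ≤
      3 * ∑ j, (w j x) ^ 2 + 6 * ⨆ u ∈ I, ∑ j, (wt j u) ^ 2 :=
  sum_sq_boosted_weights_le_general n I X hX w wt hw_nonneg hw_sum hbdd what hwhat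
end

section
/- Let K : ℝ → ℝ be an even integrable function with ∫ K(u) du = 1 and ∫ u² |K(u)| du < ∞. Define the twicing kernel K* = 2K − (K ∗ K), where ∗ denotes convolution. Then ∫ K*(u) du = 1, ∫ u K*(u) du = 0, and ∫ u² K*(u) du = 0; that is, K* is a fourth-order kernel. -/
/-!
Writing `x = t + (x - t)` inside the convolution integral and expanding binomially, the `n`-th
moment of `f ⋆ g` is `∑ i, (n choose i) mᵢ(f) mₙ₋ᵢ(g)`. For an even `K` of unit mass `m₁(K) = 0`,
so `K ⋆ K` has mass `1`, first moment `0` and second moment `2 m₂(K)`; the combination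
`2K - K ⋆ K` therefore keeps the mass and kills the first two moments.
-/

open MeasureTheory Convolution Finset

lemma integral_eq_zero_of_odd {G E : Type*} [MeasurableSpace G] [AddGroup G] [MeasurableNeg G]
    [NormedAddCommGroup E] [NormedSpace ℝ E] (μ : Measure G) [μ.IsNegInvariant] {f : G → E}
    (hf : ∀ x, f (-x) = -f x) : ∫ x, f x ∂μ = 0 := by
  have h := integral_neg_eq_self f μ
  simp only [hf, integral_neg] at h
  have h2 : (2 : ℝ) • ∫ x, f x ∂μ = 0 := by
    rw [two_smul]; nth_rw 1 [← h]; exact neg_add_cancel _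
  exact (smul_eq_zero.1 h2).resolve_left two_ne_zero

lemma integrable_pow_mul_of_le {f : ℝ → ℝ} {n i : ℕ} (hf : Integrable f)
    (hfn : Integrable fun x ↦ x ^ n * f x) (hi : i ≤ n) :
    Integrable fun x ↦ x ^ i * f x := by
  refine (hf.norm.add hfn.norm).mono' ((continuous_pow i).aestronglyMeasurable.mul hf.1) ?_
  filter_upwards with x
  have hpow : ‖x‖ ^ i ≤ 1 + ‖x‖ ^ n := by
    rcases le_total ‖x‖ 1 with h | h
    · linarith [pow_le_one₀ (n := i) (norm_nonneg x) h, pow_nonneg (norm_nonneg x) n]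
    · linarith [pow_le_pow_right₀ h hi]
  simp only [Pi.add_apply, norm_mul, norm_pow]
  nlinarith [norm_nonneg (f x)]

section ConvolutionMoments

variable {f g : ℝ → ℝ} {n : ℕ} (hf : ∀ i ≤ n, Integrable fun x ↦ x ^ i * f x)
  (hg : ∀ i ≤ n, Integrable fun x ↦ x ^ i * g x)
include hf hg

lemma integrable_pow_mul_convolution_pow_mul {i : ℕ} (hi : i ∈ range (n + 1)) :
    Integrable ((fun t ↦ t ^ i * f t) ⋆ (fun t ↦ t ^ (n - i) * g t)) :=
  (hf i (mem_range_succ_iff.1 hi)).integrable_convolution _ (hg (n - i) (n.sub_le i))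

lemma pow_mul_convolution_ae_eq :
    (fun x ↦ x ^ n * (f ⋆ g) x) =ᵐ[volume] fun x ↦ ∑ i ∈ range (n + 1),
      (n.choose i : ℝ) * ((fun t ↦ t ^ i * f t) ⋆ (fun t ↦ t ^ (n - i) * g t)) x := by
  have hexists : ∀ᵐ x, ∀ i ∈ range (n + 1), ConvolutionExistsAt (fun t ↦ t ^ i * f t)
      (fun t ↦ t ^ (n - i) * g t) x (ContinuousLinearMap.lsmul ℝ ℝ) :=
    (Filter.eventually_all_finset _).2 fun i hi ↦
      (hf i (mem_range_succ_iff.1 hi)).ae_convolution_exists _ (hg (n - i) (n.sub_le i))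
  filter_upwards [hexists] with x hx
  simp only [convolution_lsmul, smul_eq_mul]
  calc x ^ n * ∫ t, f t * g (x - t)
      = ∫ t, ∑ i ∈ range (n + 1),
          (n.choose i : ℝ) * (t ^ i * f t * ((x - t) ^ (n - i) * g (x - t))) := by
        rw [← integral_const_mul]
        congr 1 with t
        have hbinom := add_pow t (x - t) n
        rw [add_sub_cancel] at hbinom
        rw [hbinom, sum_mul]
        exact sum_congr rfl fun i _ ↦ by ring
    _ = _ := by
        rw [integral_finsetSum _ fun i hi ↦ ?_]
        · simp only [integral_const_mul]
        · exact (hx i hi).integrable.const_mul _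

lemma integrable_pow_mul_convolution : Integrable fun x ↦ x ^ n * (f ⋆ g) x :=
  (integrable_finsetSum _ fun _ hi ↦
    (integrable_pow_mul_convolution_pow_mul hf hg hi).const_mul _).congr
    (pow_mul_convolution_ae_eq hf hg).symm

lemma integral_pow_mul_convolution :
    ∫ x, x ^ n * (f ⋆ g) x = ∑ i ∈ range (n + 1),
      (n.choose i : ℝ) * ((∫ x, x ^ i * f x) * ∫ x, x ^ (n - i) * g x) := by
  rw [integral_congr_ae (pow_mul_convolution_ae_eq hf hg), integral_finsetSum _ fun _ hi ↦
    (integrable_pow_mul_convolution_pow_mul hf hg hi).const_mul _]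
  refine sum_congr rfl fun i hi ↦ ?_
  rw [integral_const_mul, integral_convolution _ (hf i (mem_range_succ_iff.1 hi))
    (hg (n - i) (n.sub_le i))]
  rfl

end ConvolutionMoments

noncomputable def twicingKernel (K : ℝ → ℝ) : ℝ → ℝ := fun x ↦ 2 * K x - (K ⋆ K) x

lemma integral_pow_mul_twicingKernel {K : ℝ → ℝ} {n : ℕ}
    (hK : ∀ i ≤ n, Integrable fun x ↦ x ^ i * K x) :
    ∫ x, x ^ n * twicingKernel K x = 2 * (∫ x, x ^ n * K x) - ∑ i ∈ range (n + 1),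
      (n.choose i : ℝ) * ((∫ x, x ^ i * K x) * ∫ x, x ^ (n - i) * K x) := by
  simp only [twicingKernel, mul_sub, mul_left_comm _ (2 : ℝ)]
  rw [integral_sub ((hK n le_rfl).const_mul 2) (integrable_pow_mul_convolution hK hK),
    integral_const_mul, integral_pow_mul_convolution hK hK]

theorem twicing_kernel_is_fourth_order
    (K : ℝ → ℝ) (hK_even : ∀ u, K (-u) = K u)
    (hK_int : Integrable K)
    (hK_one : ∫ u, K u = 1)
    (hK_mom2 : Integrable (fun u => u ^ 2 * |K u|))
    (Kstar : ℝ → ℝ)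
    (hKstar : ∀ x, Kstar x = 2 * K x - ∫ z, K (x - z) * K z) :
    (∫ u, Kstar u = 1) ∧ (∫ u, u * Kstar u = 0) ∧ (∫ u, u ^ 2 * Kstar u = 0) := by
  obtain rfl : Kstar = twicingKernel K := funext fun x ↦ by
    rw [hKstar, twicingKernel, convolution_lsmul_swap]; rfl
  have hK_mom : ∀ i ≤ 2, Integrable fun x ↦ x ^ i * K x := by
    refine fun i hi ↦ integrable_pow_mul_of_le hK_int (hK_mom2.mono' ?_ ?_) hi
    · exact (continuous_pow 2).aestronglyMeasurable.mul hK_int.1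
    · exact ae_of_all _ fun u ↦ by simp
  have hK_mom1 : ∫ x, x * K x = 0 := integral_eq_zero_of_odd volume fun x ↦ by simp [hK_even]
  have hmoment (n : ℕ) (hn : n ≤ 2) :=
    integral_pow_mul_twicingKernel fun i hi ↦ hK_mom i (hi.trans hn)
  refine ⟨?_, ?_, ?_⟩
  · have h := hmoment 0 (by norm_num)
    norm_num [hK_one] at h
    exact h
  · simpa [sum_range_succ, hK_one, hK_mom1] using hmoment 1 (by norm_num)
  · have h := hmoment 2 le_rfl
    norm_num [sum_range_succ, hK_one, hK_mom1] at h
    linarith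
end

section
/- Let q ≥ 1 be an integer and let L : ℝ → ℝ be integrable with ∫ L(u) du = 1, ∫ u^j L(u) du = 0 for 1 ≤ j ≤ q − 1, and ∫ |u|^{2q−1} |L(u)| du < ∞. Define L° = 2L − (L ∗ L). Then ∫ L°(u) du = 1 and ∫ u^j L°(u) du = 0 for all 1 ≤ j ≤ 2q − 1; that is, twicing a kernel of order q produces a kernel of order 2q. -/
/-!
Writing `u = (u - z) + z`, the `j`-th moment of `L ∗ L` is the binomial sum
`∑ C(j,k) m_k m_{j-k}` of the moments `m_k` of `L` (Fubini after the shear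
`(x, y) ↦ (x + y, y)`).
For `1 ≤ j ≤ 2q - 1` every inner term has a factor `m_k` with `1 ≤ k ≤ q - 1`, so the sum is
`2 m_j`, which `2L` cancels exactly.
-/

open MeasureTheory Finset

lemma abs_pow_le_one_add_abs_pow {k N : ℕ} (hk : k ≤ N) (u : ℝ) :
    |u| ^ k ≤ 1 + |u| ^ N := by
  rcases le_total |u| 1 with h | h
  · linarith [pow_le_one₀ (n := k) (abs_nonneg u) h, pow_nonneg (abs_nonneg u) N]
  · linarith [pow_le_pow_right₀ h hk]

lemma integrable_pow_mul_of_le_s13 {f : ℝ → ℝ} {k N : ℕ} (hk : k ≤ N) (hf : Integrable f)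
    (hfN : Integrable (fun u => |u| ^ N * |f u|)) : Integrable (fun u => u ^ k * f u) := by
  refine (hf.abs.add hfN).mono' ((continuous_pow k).aestronglyMeasurable.mul hf.1) ?_
  filter_upwards with u
  calc ‖u ^ k * f u‖ = |u| ^ k * |f u| := by simp only [norm_mul, norm_pow, Real.norm_eq_abs]
    _ ≤ (1 + |u| ^ N) * |f u| := by gcongr; exact abs_pow_le_one_add_abs_pow hk u
    _ = |f u| + |u| ^ N * |f u| := by ring

lemma integrable_comp_sub_prod {g : ℝ × ℝ → ℝ} (hg : Integrable g (volume.prod volume)) :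
    Integrable (fun p : ℝ × ℝ => g (p.1 - p.2, p.2)) (volume.prod volume) :=
  (measurePreserving_sub_prod volume volume).integrable_comp_of_integrable hg

lemma integral_comp_sub_prod {g : ℝ × ℝ → ℝ} (hg : Integrable g (volume.prod volume)) :
    ∫ p : ℝ × ℝ, g (p.1 - p.2, p.2) ∂(volume.prod volume) =
      ∫ p, g p ∂(volume.prod volume) := by
  have h := measurePreserving_sub_prod (volume : Measure ℝ) volume
  have hg_map : AEStronglyMeasurable g ((volume.prod volume).map _) :=
    h.map_eq ▸ hg.aestronglyMeasurable
  rw [← integral_map h.measurable.aemeasurable hg_map, h.map_eq]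

section Moments

variable {f g : ℝ → ℝ} {j : ℕ}

lemma integrable_and_integral_add_pow_mul_mul
    (hf : ∀ k ≤ j, Integrable (fun u => u ^ k * f u))
    (hg : ∀ k ≤ j, Integrable (fun u => u ^ k * g u)) :
    Integrable (fun p : ℝ × ℝ => (p.1 + p.2) ^ j * (f p.1 * g p.2)) (volume.prod volume) ∧
    ∫ p : ℝ × ℝ, (p.1 + p.2) ^ j * (f p.1 * g p.2) ∂(volume.prod volume) =
      ∑ k ∈ range (j + 1),
        (j.choose k : ℝ) * ((∫ u, u ^ k * f u) * ∫ u, u ^ (j - k) * g u) := by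
  have hexpand : (fun p : ℝ × ℝ => (p.1 + p.2) ^ j * (f p.1 * g p.2)) = fun p =>
      ∑ k ∈ range (j + 1),
        (j.choose k : ℝ) * ((p.1 ^ k * f p.1) * (p.2 ^ (j - k) * g p.2)) := by
    funext p
    rw [add_pow, sum_mul]
    exact sum_congr rfl fun k _ => by ring
  have hterm : ∀ k ∈ range (j + 1), Integrable (fun p : ℝ × ℝ =>
      (j.choose k : ℝ) * ((p.1 ^ k * f p.1) * (p.2 ^ (j - k) * g p.2))) (volume.prod volume) :=
    fun k hk => ((hf k (mem_range_succ_iff.mp hk)).mul_prod (hg (j - k) (j.sub_le k))).const_mul _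
  rw [hexpand, integral_finsetSum _ hterm]
  refine ⟨integrable_finsetSum _ hterm, sum_congr rfl fun k _ => ?_⟩
  rw [integral_const_mul, integral_prod_mul (fun u => u ^ k * f u) (fun u => u ^ (j - k) * g u)]

lemma integrable_and_integral_pow_mul_convolution
    (hf : ∀ k ≤ j, Integrable (fun u => u ^ k * f u))
    (hg : ∀ k ≤ j, Integrable (fun u => u ^ k * g u)) :
    Integrable (fun u => u ^ j * ∫ z, f (u - z) * g z) ∧
    ∫ u, u ^ j * (∫ z, f (u - z) * g z) =
      ∑ k ∈ range (j + 1),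
        (j.choose k : ℝ) * ((∫ u, u ^ k * f u) * ∫ u, u ^ (j - k) * g u) := by
  obtain ⟨hint, hval⟩ := integrable_and_integral_add_pow_mul_mul hf hg
  have hsheared := integrable_comp_sub_prod hint
  simp only [sub_add_cancel] at hsheared
  have hinner : (fun u => u ^ j * ∫ z, f (u - z) * g z) =
      fun u => ∫ z, u ^ j * (f (u - z) * g z) := by
    funext u; rw [integral_const_mul]
  rw [hinner]
  refine ⟨hsheared.integral_prod_left, ?_⟩
  rw [integral_integral hsheared, ← hval, ← integral_comp_sub_prod hint]
  simp only [sub_add_cancel]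

lemma integral_pow_mul_twicing (hf : ∀ k ≤ j, Integrable (fun u => u ^ k * f u)) :
    ∫ u, u ^ j * (2 * f u - ∫ z, f (u - z) * f z) =
      2 * (∫ u, u ^ j * f u) -
        ∑ k ∈ range (j + 1),
          (j.choose k : ℝ) * ((∫ u, u ^ k * f u) * ∫ u, u ^ (j - k) * f u) := by
  obtain ⟨hconv, hconv_eq⟩ := integrable_and_integral_pow_mul_convolution hf hf
  simp_rw [mul_sub, mul_left_comm _ (2 : ℝ)]
  rw [integral_sub ((hf j le_rfl).const_mul 2) hconv, integral_const_mul, hconv_eq]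

end Moments

lemma sum_choose_mul_mul_eq_two_mul {R : Type*} [CommSemiring R] {m : ℕ → R} {q j : ℕ}
    (hm_zero : m 0 = 1) (hm : ∀ k, 1 ≤ k → k ≤ q - 1 → m k = 0) (hj_pos : 1 ≤ j)
    (hj : j ≤ 2 * q - 1) :
    ∑ k ∈ range (j + 1), (j.choose k : R) * (m k * m (j - k)) = 2 * m j := by
  have hends : ({0, j} : Finset ℕ) ⊆ range (j + 1) := by
    simp [insert_subset_iff]
  rw [← sum_subset hends, sum_pair (by omega : (0 : ℕ) ≠ j)]
  · simp only [Nat.choose_zero_right, Nat.choose_self, Nat.cast_one, hm_zero, tsub_zero,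
      tsub_self, one_mul, mul_one]
    ring
  · intro k hk hk_ends
    simp only [mem_insert, mem_singleton, not_or] at hk_ends
    have hk_lt := mem_range.mp hk
    rcases le_or_gt k (q - 1) with h | h
    · simp [hm k (by omega) h]
    · simp [hm (j - k) (by omega) (by omega)]

theorem twicing_doubles_kernel_order_general
    (q : ℕ)
    (L : ℝ → ℝ) (hL_int : Integrable L)
    (hL_one : ∫ u, L u = 1)
    (hL_mom : ∀ j : ℕ, 1 ≤ j → j ≤ q - 1 → ∫ u, u ^ j * L u = 0)
    (hL_abs : Integrable (fun u => |u| ^ (2 * q - 1) * |L u|))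
    (Lt : ℝ → ℝ)
    (hLt : ∀ x, Lt x = 2 * L x - ∫ z, L (x - z) * L z) :
    (∫ u, Lt u = 1) ∧ ∀ j : ℕ, 1 ≤ j → j ≤ 2 * q - 1 → ∫ u, u ^ j * Lt u = 0 := by
  obtain rfl : Lt = fun u => 2 * L u - ∫ z, L (u - z) * L z := funext hLt
  have hLt_mom (j : ℕ) (hj : j ≤ 2 * q - 1) := integral_pow_mul_twicing
    fun k hk => integrable_pow_mul_of_le_s13 (hk.trans hj) hL_int hL_abs
  constructor
  · have h0 := hLt_mom 0 (Nat.zero_le _)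
    norm_num [hL_one] at h0
    exact h0
  intro j hj_pos hj
  rw [hLt_mom j hj, sum_choose_mul_mul_eq_two_mul (by simpa using hL_one) hL_mom hj_pos hj,
    sub_self]

theorem twicing_doubles_kernel_order
    (q : ℕ) (hq : 1 ≤ q)
    (L : ℝ → ℝ) (hL_int : Integrable L)
    (hL_one : ∫ u, L u = 1)
    (hL_mom : ∀ j : ℕ, 1 ≤ j → j ≤ q - 1 → ∫ u, u ^ j * L u = 0)
    (hL_abs : Integrable (fun u => |u| ^ (2 * q - 1) * |L u|))
    (Lt : ℝ → ℝ)
    (hLt : ∀ x, Lt x = 2 * L x - ∫ z, L (x - z) * L z) :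
    (∫ u, Lt u = 1) ∧ ∀ j : ℕ, 1 ≤ j → j ≤ 2 * q - 1 → ∫ u, u ^ j * Lt u = 0 :=
  twicing_doubles_kernel_order_general q L hL_int hL_one hL_mom hL_abs Lt hLt
end

section
/- Let K : ℝ → ℝ be an even nonnegative integrable function with ∫ K(u) du = 1 and support contained in [−1,1]. Define recursively K^{[0]} = K and K^{[r]} = 2K^{[r−1]} − (K^{[r−1]} ∗ K^{[r−1]}) for r ≥ 1. Then for every r ≥ 0, ∫ K^{[r]}(u) du = 1 and ∫ u^j K^{[r]}(u) du = 0 for all 1 ≤ j ≤ 2(r+1) − 1; that is, K^{[r]} is a kernel of order 2(r+1). -/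
open MeasureTheory

/-- The iterated twicing kernels `K^[r]`, with `K^[0] = K` and
`K^[r] = 2 K^[r-1] - (K^[r-1] * K^[r-1])` (convolution). -/
noncomputable def iterTwicingKernel (K : ℝ → ℝ) : ℕ → ℝ → ℝ
  | 0 => K
  | r + 1 => fun x =>
      2 * iterTwicingKernel K r x - ∫ z, iterTwicingKernel K r (x - z) * iterTwicingKernel K r z

/-! Writing `m_j f = ∫ u ^ j * f u`, the binomial theorem under the convolution integral gives
`m_j (f ∗ g) = ∑ₖ (j choose k) m_k f * m_{j-k} g`. If `f` has order `q` and `1 ≤ j < 2q`, every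
term with `0 < k < j` contains a vanishing moment, so `m_j (f ∗ f) = 2 m_j f` and twicing
`2f - f ∗ f` has order `2q`. An even kernel has order `2`, hence `K^[r]` has order
`2^(r+1) ≥ 2(r+1)`. Compact support makes all moments of `K` integrable, and twicing preserves
integrability of all moments. -/

open Function ContinuousLinearMap
open scoped Convolution

noncomputable def kernelMoment (f : ℝ → ℝ) (j : ℕ) : ℝ := ∫ u, u ^ j * f u

def IsKernelOfOrder (f : ℝ → ℝ) (q : ℕ) : Prop :=
  ∫ u, f u = 1 ∧ ∀ j, 1 ≤ j → j < q → kernelMoment f j = 0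

noncomputable def twicing (f : ℝ → ℝ) : ℝ → ℝ := fun x => 2 * f x - (f ⋆[mul ℝ ℝ] f) x

theorem kernelMoment_zero (f : ℝ → ℝ) : kernelMoment f 0 = ∫ u, f u := by
  simp [kernelMoment]

theorem MeasureTheory.Integrable.pow_mul_of_support_subset {f : ℝ → ℝ} (hf : Integrable f)
    {s : Set ℝ} (hs : IsCompact s) (hfs : support f ⊆ s) (k : ℕ) :
    Integrable (fun u => u ^ k * f u) := by
  rw [← integrableOn_iff_integrable_of_support_subset
    ((support_mul_subset_right _ _).trans hfs)]
  exact IntegrableOn.continuousOn_mul (continuous_pow k).continuousOn hf.integrableOn hs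

theorem kernelMoment_eq_zero_of_even {f : ℝ → ℝ} (hf : ∀ u, f (-u) = f u) {j : ℕ} (hj : Odd j) :
    kernelMoment f j = 0 := by
  have h := integral_neg_eq_self (fun u => u ^ j * f u) volume
  simp only [hf, hj.neg_pow, neg_mul, integral_neg] at h
  exact CharZero.eq_neg_self_iff.mp h.symm

theorem pow_mul_convolution_ae_eq_s14 {f g : ℝ → ℝ} (hf : ∀ k, Integrable (fun u => u ^ k * f u))
    (hg : ∀ k, Integrable (fun u => u ^ k * g u)) (j : ℕ) :
    (fun x => x ^ j * (f ⋆[mul ℝ ℝ] g) x) =ᵐ[volume] fun x =>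
      ∑ k ∈ Finset.range (j + 1), (j.choose k : ℝ) *
        ((fun y => y ^ k * f y) ⋆[mul ℝ ℝ] (fun z => z ^ (j - k) * g z)) x := by
  have hex : ∀ᵐ x, ∀ k, ConvolutionExistsAt (fun y => y ^ k * f y)
      (fun z => z ^ (j - k) * g z) x (mul ℝ ℝ) :=
    ae_all_iff.2 fun k => (hf k).ae_convolution_exists _ (hg (j - k))
  filter_upwards [hex] with x hx
  simp only [convolution_mul, ← integral_const_mul]
  have hint (k : ℕ) : Integrable fun t => t ^ k * f t * ((x - t) ^ (j - k) * g (x - t)) := hx k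
  rw [← integral_finsetSum _ fun k _ => (hint k).const_mul _]
  refine integral_congr_ae (.of_forall fun t => ?_)
  have hbinom : x ^ j = ∑ k ∈ Finset.range (j + 1), t ^ k * (x - t) ^ (j - k) * j.choose k := by
    rw [← add_pow]; ring
  simp only [hbinom, Finset.sum_mul]
  exact Finset.sum_congr rfl fun k _ => by ring

theorem integrable_pow_mul_convolution_s14 {f g : ℝ → ℝ}
    (hf : ∀ k, Integrable (fun u => u ^ k * f u)) (hg : ∀ k, Integrable (fun u => u ^ k * g u))
    (j : ℕ) : Integrable (fun x => x ^ j * (f ⋆[mul ℝ ℝ] g) x) :=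
  (integrable_finsetSum _ fun k _ =>
    ((hf k).integrable_convolution _ (hg (j - k))).const_mul _).congr
      (pow_mul_convolution_ae_eq_s14 hf hg j).symm

theorem kernelMoment_convolution {f g : ℝ → ℝ}
    (hf : ∀ k, Integrable (fun u => u ^ k * f u)) (hg : ∀ k, Integrable (fun u => u ^ k * g u))
    (j : ℕ) : kernelMoment (f ⋆[mul ℝ ℝ] g) j =
      ∑ k ∈ Finset.range (j + 1), (j.choose k : ℝ) * kernelMoment f k * kernelMoment g (j - k) := by
  rw [kernelMoment, integral_congr_ae (pow_mul_convolution_ae_eq_s14 hf hg j),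
    integral_finsetSum _ fun k _ => ((hf k).integrable_convolution _ (hg (j - k))).const_mul _]
  refine Finset.sum_congr rfl fun k _ => ?_
  rw [integral_const_mul, integral_convolution _ (hf k) (hg (j - k)), mul_assoc]
  rfl

theorem integrable_pow_mul_twicing {f : ℝ → ℝ} (hf : ∀ k, Integrable (fun u => u ^ k * f u))
    (k : ℕ) : Integrable (fun u => u ^ k * twicing f u) := by
  simp only [twicing, mul_sub, mul_left_comm _ (2 : ℝ)]
  exact ((hf k).const_mul 2).sub (integrable_pow_mul_convolution_s14 hf hf k)

theorem kernelMoment_twicing {f : ℝ → ℝ} (hf : ∀ k, Integrable (fun u => u ^ k * f u)) (j : ℕ) :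
    kernelMoment (twicing f) j = 2 * kernelMoment f j - kernelMoment (f ⋆[mul ℝ ℝ] f) j := by
  simp only [kernelMoment, twicing, mul_sub, mul_left_comm _ (2 : ℝ)]
  rw [integral_sub ((hf j).const_mul 2) (integrable_pow_mul_convolution_s14 hf hf j),
    integral_const_mul]

theorem IsKernelOfOrder.mono {f : ℝ → ℝ} {p q : ℕ} (hf : IsKernelOfOrder f q) (hpq : p ≤ q) :
    IsKernelOfOrder f p :=
  ⟨hf.1, fun j hj hjp => hf.2 j hj (hjp.trans_le hpq)⟩

theorem IsKernelOfOrder.kernelMoment_convolution_self {f : ℝ → ℝ} {q : ℕ}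
    (hf : ∀ k, Integrable (fun u => u ^ k * f u)) (hq : IsKernelOfOrder f q) {j : ℕ}
    (hj : 1 ≤ j) (hjq : j < 2 * q) :
    kernelMoment (f ⋆[mul ℝ ℝ] f) j = 2 * kernelMoment f j := by
  have hvanish : ∀ k ∈ Finset.range (j + 1), k ≠ 0 ∧ k ≠ j →
      (j.choose k : ℝ) * kernelMoment f k * kernelMoment f (j - k) = 0 := by
    rintro k hk ⟨hk0, hkj⟩
    have hk : k < j + 1 := Finset.mem_range.1 hk
    rcases lt_or_ge k q with hkq | hkq
    · rw [hq.2 k (by omega) hkq]; ring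
    · rw [hq.2 (j - k) (by omega) (by omega)]; ring
  rw [kernelMoment_convolution hf hf, Finset.sum_eq_add_of_mem 0 j (by simp) (by simp)
    (by omega) hvanish]
  simp only [Nat.choose_zero_right, Nat.choose_self, Nat.cast_one, kernelMoment_zero, hq.1,
    tsub_zero, tsub_self]
  ring

theorem IsKernelOfOrder.twicing {f : ℝ → ℝ} {q : ℕ} (hf : ∀ k, Integrable (fun u => u ^ k * f u))
    (hq : IsKernelOfOrder f q) : IsKernelOfOrder (twicing f) (2 * q) := by
  refine ⟨?_, fun j hj hjq => ?_⟩
  · rw [← kernelMoment_zero, kernelMoment_twicing hf, kernelMoment_convolution hf hf]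
    simp only [zero_add, Finset.range_one, Finset.sum_singleton, Nat.choose_self, Nat.cast_one,
      tsub_self, kernelMoment_zero, hq.1]
    norm_num
  · rw [kernelMoment_twicing hf, hq.kernelMoment_convolution_self hf hj hjq, sub_self]

theorem iterTwicingKernel_succ (K : ℝ → ℝ) (r : ℕ) :
    iterTwicingKernel K (r + 1) = twicing (iterTwicingKernel K r) := by
  ext x
  show 2 * _ - _ = 2 * _ - _
  exact congrArg _ (integral_congr_ae (.of_forall fun z => mul_comm _ _))

theorem integrable_pow_mul_iterTwicingKernel {K : ℝ → ℝ}
    (hK : ∀ k, Integrable (fun u => u ^ k * K u)) (r k : ℕ) :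
    Integrable (fun u => u ^ k * iterTwicingKernel K r u) := by
  induction r generalizing k with
  | zero => exact hK k
  | succ r ih => rw [iterTwicingKernel_succ]; exact integrable_pow_mul_twicing ih k

theorem isKernelOfOrder_iterTwicingKernel {K : ℝ → ℝ} {q : ℕ}
    (hK : ∀ k, Integrable (fun u => u ^ k * K u)) (hq : IsKernelOfOrder K q) (r : ℕ) :
    IsKernelOfOrder (iterTwicingKernel K r) (2 ^ r * q) := by
  induction r with
  | zero => rwa [pow_zero, one_mul]
  | succ r ih =>
    rw [iterTwicingKernel_succ, pow_succ, mul_right_comm, mul_comm _ 2]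
    exact ih.twicing (integrable_pow_mul_iterTwicingKernel hK r)

theorem iterated_twicing_kernel_order_general
    (K : ℝ → ℝ) (hK_even : ∀ u, K (-u) = K u)
    (hK_int : Integrable K)
    (hK_one : ∫ u, K u = 1)
    (hK_supp : Function.support K ⊆ Set.Icc (-1 : ℝ) 1) :
    ∀ r : ℕ, (∫ u, iterTwicingKernel K r u = 1) ∧
      ∀ j : ℕ, 1 ≤ j → j ≤ 2 * (r + 1) - 1 → ∫ u, u ^ j * iterTwicingKernel K r u = 0 := by
  intro r
  have hmom : ∀ k, Integrable (fun u => u ^ k * K u) :=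
    hK_int.pow_mul_of_support_subset isCompact_Icc hK_supp
  have horder : IsKernelOfOrder K 2 := ⟨hK_one, fun j hj hj2 =>
    kernelMoment_eq_zero_of_even hK_even (by rw [show j = 1 by omega]; exact odd_one)⟩
  have hbound : 2 * (r + 1) ≤ 2 ^ r * 2 := by
    have := Nat.lt_two_pow_self (n := r); omega
  obtain ⟨hone, hvanish⟩ := (isKernelOfOrder_iterTwicingKernel hmom horder r).mono hbound
  exact ⟨hone, fun j hj hjr => hvanish j hj (by omega)⟩

theorem iterated_twicing_kernel_order
    (K : ℝ → ℝ) (hK_even : ∀ u, K (-u) = K u) (hK_nonneg : ∀ u, 0 ≤ K u)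
    (hK_int : Integrable K)
    (hK_one : ∫ u, K u = 1)
    (hK_supp : Function.support K ⊆ Set.Icc (-1 : ℝ) 1) :
    ∀ r : ℕ, (∫ u, iterTwicingKernel K r u = 1) ∧
      ∀ j : ℕ, 1 ≤ j → j ≤ 2 * (r + 1) - 1 → ∫ u, u ^ j * iterTwicingKernel K r u = 0 :=
  iterated_twicing_kernel_order_general K hK_even hK_int hK_one hK_supp
end
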